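/- arXiv:0911.0735 — 2 statements merged into one kernel-verified Lean document; each statement's English description precedes it below -/
import Mathlib

section
/- Let λ and μ be integral g_0-dominant atypical weights with the same atypicality type, and suppose that λ − μ = θδ + Σ_{i=1}^m θ_i(δ − ε_i) + Σ_{i=1}^m θ̄_i(δ + ε_i) for some θ ∈ ℤ≥0 and θ_i, θ̄_i ∈ {0, 1}. Then μ belongs to the set {λ, λˇ, λ^σ, (λ^σ)ˇ, (λ^σ)^}. (This is the combinatorial content of Lemma 3.8(1): P_0(V_λ) ⊆ {λ, λˇ, λ^σ, (λ^σ)ˇ, (λ^σ)^}, for k = 2m+1.) -/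
/-!
Combinatorics of weights for the orthosymplectic Lie superalgebra
`osp_{2m+1|2} = B(m,1)` (so `k = 2m+1`, `s = 1/2`), with its distinguished
Borel subalgebra.  A weight is a tuple `λ = (λ₀ | λ₁, …, λ_m) ∈ ℚ^{m+1}`,
encoded as `ℚ × (Fin m → ℚ)` (the index `i : Fin m` stands for the coordinate
`λ_{i+1}`).
-/

open Finset

noncomputable section

abbrev Wt (m : ℕ) := ℚ × (Fin m → ℚ)

def deltaW (m : ℕ) : Wt m := (1, 0)

def epsW {m : ℕ} (i : Fin m) : Wt m := (0, Pi.single i 1)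

/-- The ρ-translated weight `λ̃ = λ + ρ`, with
`ρ = (s−m | m−s, m−1−s, …, 1−s)` and `s = 1/2`. -/
def tilde (m : ℕ) (lam : Wt m) : Wt m :=
  (lam.1 + 1 / 2 - m, fun i => lam.2 i + (m : ℚ) - 1 / 2 - ((i : ℕ) : ℚ))

/-- `λ` is integral: `λ₀ ∈ ℤ` and `λ₁, …, λ_m` all in `ℤ` or all in `1/2 + ℤ`. -/
def Integral (m : ℕ) (lam : Wt m) : Prop :=
  (∃ n : ℤ, lam.1 = (n : ℚ)) ∧
    ((∀ i, ∃ n : ℤ, lam.2 i = (n : ℚ)) ∨ ∀ i, ∃ n : ℤ, lam.2 i = (n : ℚ) + 1 / 2)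

/-- `λ` is `g₀`-dominant: `λ₁ ≥ λ₂ ≥ … ≥ λ_m ≥ 0`. -/
def G0Dom (m : ℕ) (lam : Wt m) : Prop :=
  (∀ i j : Fin m, i ≤ j → lam.2 j ≤ lam.2 i) ∧ ∀ i, 0 ≤ lam.2 i

/-- `λ` is atypical: `|λ̃₀| = λ̃_ℓ` for some `ℓ`. -/
def Atypical (m : ℕ) (lam : Wt m) : Prop :=
  ∃ l : Fin m, |(tilde m lam).1| = (tilde m lam).2 l

/-- The atypicality type `S(λ̄) = {λ̃_i : i ≠ ℓ}` of an atypical `g₀`-dominant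
weight `λ` (where `λ̃_ℓ = |λ̃₀|`). -/
def atypType (m : ℕ) (lam : Wt m) : Finset ℚ :=
  (Finset.univ.image fun i => (tilde m lam).2 i).erase |(tilde m lam).1|

/-- `λ` is `g`-dominant: it is integral, `g₀`-dominant, `λ₀ ∈ ℤ≥0`, and
`λ_j = 0` whenever `j > λ₀`. -/
def GDom (m : ℕ) (lam : Wt m) : Prop :=
  Integral m lam ∧ G0Dom m lam ∧ 0 ≤ lam.1 ∧
    ∀ i : Fin m, lam.1 < ((i : ℕ) : ℚ) + 1 → lam.2 i = 0

/-- `λ^σ = (−λ₀ + 2(m−s) | λ₁, …, λ_m)` with `s = 1/2`. -/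
def sigmaW (m : ℕ) (lam : Wt m) : Wt m := (-lam.1 + 2 * (m : ℚ) - 1, lam.2)

/-- `γ` is the atypical root of `λ`: `γ = δ + ε_ℓ` if `λ̃₀ = λ̃_ℓ`, and
`γ = δ − ε_ℓ` if `λ̃₀ = −λ̃_ℓ`. -/
def AtypRoot (m : ℕ) (lam γ : Wt m) : Prop :=
  ∃ l : Fin m,
    (γ = deltaW m + epsW l ∧ (tilde m lam).1 = (tilde m lam).2 l) ∨
      (γ = deltaW m - epsW l ∧ (tilde m lam).1 = -(tilde m lam).2 l)

/-- `λ` is regular: `|λ̃₁|, …, |λ̃_m|` are pairwise distinct. -/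
def Regular (m : ℕ) (lam : Wt m) : Prop :=
  ∀ i j : Fin m, |(tilde m lam).2 i| = |(tilde m lam).2 j| → i = j

/-- Elements of the Weyl group `W₀` of type `B_m`: signed permutations
(`true` = change sign). -/
abbrev W0T (m : ℕ) := Equiv.Perm (Fin m) × (Fin m → Bool)

/-- The action of `w ∈ W₀` on ρ-translated weights: it fixes the coordinate
`λ̃₀` and signed-permutes `λ̃₁, …, λ̃_m`. -/
def tact (m : ℕ) (w : W0T m) (v : Wt m) : Wt m :=
  (v.1, fun i => (if w.2 i then (-1 : ℚ) else 1) * v.2 (w.1⁻¹ i))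

/-- The signature of `w ∈ W₀`. -/
def sgn (m : ℕ) (w : W0T m) : ℤ :=
  (Equiv.Perm.sign w.1 : ℤ) * ∏ i, (if w.2 i then (-1 : ℤ) else 1)

/-- `ν` is `W₀`-dot-conjugate to `λ`, i.e. `ν = w·λ = w(λ+ρ) − ρ` for some
`w ∈ W₀`. -/
def DotConj (m : ℕ) (lam nu : Wt m) : Prop :=
  ∃ w : W0T m, tilde m nu = tact m w (tilde m lam)

/-- `ν = λ⁺`: `ν` is the (unique) `g₀`-dominant `W₀`-dot-conjugate of `λ`. -/
def IsPlus (m : ℕ) (lam nu : Wt m) : Prop :=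
  G0Dom m nu ∧ DotConj m lam nu

/-- `ν = λˇ = (λ − a₋γ)⁺`, where `γ` is the atypical root of `λ` and `a₋` is
the smallest positive integer with `λ − a₋γ` regular. -/
def IsCheck (m : ℕ) (lam nu : Wt m) : Prop :=
  ∃ γ : Wt m, AtypRoot m lam γ ∧
    ∃ a : ℕ, 0 < a ∧ Regular m (lam - (a : ℚ) • γ) ∧
      (∀ b : ℕ, 0 < b → b < a → ¬Regular m (lam - (b : ℚ) • γ)) ∧
      IsPlus m (lam - (a : ℚ) • γ) nu

/-- `ν = λ^ = (λ + a₊γ)⁺`, where `γ` is the atypical root of `λ` and `a₊` is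
the smallest positive integer with `λ + a₊γ` regular. -/
def IsHat (m : ℕ) (lam nu : Wt m) : Prop :=
  ∃ γ : Wt m, AtypRoot m lam γ ∧
    ∃ a : ℕ, 0 < a ∧ Regular m (lam + (a : ℚ) • γ) ∧
      (∀ b : ℕ, 0 < b → b < a → ¬Regular m (lam + (b : ℚ) • γ)) ∧
      IsPlus m (lam + (a : ℚ) • γ) nu

/-!
Write `A = (λ̃₁, …, λ̃_m)` and `B = (μ̃₁, …, μ̃_m)`. Both decrease with gaps at least one,
`B - A ∈ {-1, 0, 1}` coordinatewise and `μ̃₀ ≤ λ̃₀`. Equal atypicality types say that `A` and `B`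
become the same sequence once their atypical entries `A_ℓ = |λ̃₀|` and `B_ℓ' = |μ̃₀|` are deleted.
If `ℓ < ℓ'`, then `B_i = A_{i+1}` on `[ℓ, ℓ')`, which together with `B_i ≥ A_i - 1` forces
`A_ℓ, …, A_ℓ'` to be consecutive, and `B_ℓ' = A_ℓ - (ℓ' - ℓ + 1)` is the first value below `A_ℓ`
outside the common set; symmetrically for `ℓ > ℓ'`. So `μ̃` arises from `λ̃` or `(λ^σ)̃` by moving
along the atypical root until the weight first becomes regular, and then sorting: `μ` is `λ`,
`λ^σ`, `λˇ`, `(λ^σ)ˇ` or `(λ^σ)^`, the remaining sign patterns being excluded by `μ̃₀ ≤ λ̃₀`.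
-/

open Function

lemma injective_update_iff {α β : Type*} [Fintype α] [DecidableEq α] [DecidableEq β]
    {f : α → β} (hf : Injective f) (a : α) (b : β) :
    Injective (update f a b) ↔ b ∉ (univ.image f).erase (f a) := by
  constructor
  · intro hinj hb
    obtain ⟨hne, j, -, rfl⟩ := by simpa only [mem_erase, mem_image] using hb
    have hj : j ≠ a := by rintro rfl; exact hne rfl
    exact hj (hinj (a₁ := j) (a₂ := a) (by simp [hj]))
  · intro hb i j hij
    have key : ∀ k, k ≠ a → f k ≠ b := fun k hk hkb =>
      hb (mem_erase.2 ⟨fun h => hk (hf (hkb.trans h)), hkb ▸ mem_image_of_mem f (mem_univ k)⟩)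
    by_cases hi : i = a <;> by_cases hj : j = a
    · rw [hi, hj]
    · subst hi; rw [update_self, update_of_ne hj] at hij; exact absurd hij.symm (key j hj)
    · subst hj; rw [update_self, update_of_ne hi] at hij; exact absurd hij (key i hi)
    · rw [update_of_ne hi, update_of_ne hj] at hij; exact hf hij

lemma image_update_univ {α β : Type*} [Fintype α] [DecidableEq α] [DecidableEq β]
    {f : α → β} (hf : Injective f) (a : α) (b : β) :
    univ.image (update f a b) = insert b ((univ.image f).erase (f a)) := by
  rw [← image_erase hf, ← insert_erase (mem_univ a), image_insert, update_self,
    erase_insert (notMem_erase a univ)]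
  exact congrArg _ (image_congr fun i hi => update_of_ne (ne_of_mem_erase hi) _ _)

section

variable {m : ℕ}

lemma strictAnti_of_antitone_add_index {A : Fin m → ℚ}
    (hA : Antitone fun i : Fin m => A i + (i : ℕ)) : StrictAnti A := by
  intro i j hij
  have h1 := hA hij.le
  have h2 : ((i : ℕ) : ℚ) < (j : ℕ) := by exact_mod_cast hij
  simp only at h1
  linarith

lemma StrictAnti.eq_of_image_univ_eq {A B : Fin m → ℚ} (hA : StrictAnti A) (hB : StrictAnti B)
    (h : univ.image A = univ.image B) : A = B :=
  (hA.range_inj hB).1 <| by simpa using congrArg (fun s : Finset ℚ => (s : Set ℚ)) h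

def StepsIn (S : Finset ℚ) (x f : ℚ) (n : ℕ) : Prop :=
  ∀ t : ℕ, 0 < t → t < n → x + t * f ∈ S

lemma StepsIn.reverse {S : Finset ℚ} {x y f : ℚ} {n : ℕ} (h : StepsIn S x (-f) n)
    (hy : y = x - n * f) : StepsIn S y f n := by
  intro t ht htn
  have hmem := h (n - t) (by omega) (by omega)
  rw [Nat.cast_sub htn.le] at hmem
  convert hmem using 1
  rw [hy]; ring

lemma add_index_eq_of_step_le_one {A : Fin m → ℚ} {ℓ ℓ' : Fin m}
    (hA : Antitone fun i : Fin m => A i + (i : ℕ))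
    (hstep : ∀ (j : ℕ) (hj : j + 1 < m), (ℓ : ℕ) ≤ j → j < ℓ' →
      A ⟨j, by omega⟩ ≤ A ⟨j + 1, hj⟩ + 1)
    (j : ℕ) (hℓj : (ℓ : ℕ) ≤ j) (hj : j < m) (hjℓ' : j ≤ ℓ') : A ⟨j, hj⟩ + j = A ℓ + ℓ := by
  induction j, hℓj using Nat.le_induction with
  | base => rfl
  | succ j hℓj ih =>
    have h1 := ih (by omega) (by omega)
    have h2 := hstep j hj hℓj (by omega)
    have h3 := hA (show ℓ ≤ ⟨j + 1, hj⟩ from Fin.le_def.2 (by simp only; omega))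
    simp only at h3
    push_cast at h3 ⊢
    linarith

section Combinatorics

variable {k : ℕ} {A B : Fin (k + 1) → ℚ} {ℓ ℓ' : Fin (k + 1)}

lemma comp_succAbove_eq_of_erase_eq (hA : StrictAnti A) (hB : StrictAnti B)
    (hS : (univ.image A).erase (A ℓ) = (univ.image B).erase (B ℓ')) :
    A ∘ ℓ.succAbove = B ∘ ℓ'.succAbove := by
  refine ((hA.comp_strictMono (Fin.strictMono_succAbove ℓ)).range_inj
    (hB.comp_strictMono (Fin.strictMono_succAbove ℓ'))).1 ?_
  rw [Set.range_comp, Set.range_comp, Fin.range_succAbove, Fin.range_succAbove,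
    ← Set.range_sdiff_image hA.injective, ← Set.range_sdiff_image hB.injective]
  simpa using congrArg (fun s : Finset ℚ => (s : Set ℚ)) hS

lemma apply_eq_apply_succ_of_comp_succAbove_eq (h : A ∘ ℓ.succAbove = B ∘ ℓ'.succAbove) (j : ℕ)
    (hj : j + 1 < k + 1) (h1 : (ℓ : ℕ) ≤ j) (h2 : j < ℓ') : B ⟨j, by omega⟩ = A ⟨j + 1, hj⟩ := by
  have := congrFun h ⟨j, by omega⟩
  rw [comp_apply, comp_apply, Fin.succAbove_of_le_castSucc ℓ ⟨j, _⟩ (Fin.le_def.2 h1),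
    Fin.succAbove_of_castSucc_lt ℓ' ⟨j, _⟩ (Fin.lt_def.2 h2)] at this
  exact this.symm

/-- If the atypical entry moves from position `ℓ` to a later position `ℓ'`, the entries
`A ℓ, …, A ℓ'` are consecutive and `B ℓ'` is the next value below them. -/
lemma exists_stepsIn_of_lt (hA : Antitone fun i : Fin (k + 1) => A i + (i : ℕ))
    (hB : Antitone fun i : Fin (k + 1) => B i + (i : ℕ)) (hAB : ∀ i, A i ≤ B i + 1)
    (hS : (univ.image A).erase (A ℓ) = (univ.image B).erase (B ℓ')) (h : ℓ < ℓ') :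
    ∃ n : ℕ, 0 < n ∧ B ℓ' = A ℓ - n ∧ StepsIn ((univ.image A).erase (A ℓ)) (A ℓ) (-1) n := by
  have hshift := apply_eq_apply_succ_of_comp_succAbove_eq <| comp_succAbove_eq_of_erase_eq
    (strictAnti_of_antitone_add_index hA) (strictAnti_of_antitone_add_index hB) hS
  have hchain := add_index_eq_of_step_le_one hA fun j hj h1 h2 =>
    (hAB ⟨j, by omega⟩).trans_eq (by rw [hshift j hj h1 h2])
  obtain ⟨d, hd⟩ : ∃ d, (ℓ' : ℕ) = ℓ + d + 1 := ⟨ℓ' - ℓ - 1, by rw [Fin.lt_def] at h; omega⟩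
  have hdq : ((ℓ' : ℕ) : ℚ) = ℓ + d + 1 := by exact_mod_cast hd
  have hprev := hshift (ℓ + d) (hd ▸ ℓ'.isLt) (by omega) (by omega : ℓ + d < (ℓ' : ℕ))
  rw [show (⟨ℓ + d + 1, hd ▸ ℓ'.isLt⟩ : Fin (k + 1)) = ℓ' from Fin.ext hd.symm] at hprev
  have hgap := hB (show (⟨ℓ + d, by omega⟩ : Fin (k + 1)) ≤ ℓ' from
    Fin.le_def.2 (by simp only; omega))
  have hlast := hchain ℓ' (by omega) ℓ'.isLt le_rfl
  have hlow := hAB ℓ'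
  simp only at hgap
  push_cast at hgap
  refine ⟨d + 2, by omega, by push_cast; linarith, fun t ht htn => ?_⟩
  have hmem := hchain (ℓ + t) (by omega) (by omega) (by omega)
  refine mem_erase.2 ⟨?_, mem_image.2 ⟨⟨ℓ + t, by omega⟩, mem_univ _, ?_⟩⟩
  · have : (0 : ℚ) < t := by exact_mod_cast ht
    linarith
  · push_cast at hmem
    linarith

end Combinatorics

lemma eq_or_exists_stepsIn {A B : Fin m → ℚ} {ℓ ℓ' : Fin m}
    (hA : Antitone fun i : Fin m => A i + (i : ℕ)) (hB : Antitone fun i : Fin m => B i + (i : ℕ))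
    (hAB : ∀ i, B i = A i - 1 ∨ B i = A i ∨ B i = A i + 1)
    (hS : (univ.image A).erase (A ℓ) = (univ.image B).erase (B ℓ')) :
    (ℓ' = ℓ ∧ B = A) ∨ ∃ f : ℚ, (f = 1 ∨ f = -1) ∧ ∃ n : ℕ, 0 < n ∧
      StepsIn ((univ.image A).erase (A ℓ)) (A ℓ) f n ∧ B ℓ' = A ℓ + n * f := by
  obtain _ | k := m
  · exact ℓ.elim0
  rcases lt_trichotomy ℓ ℓ' with h | rfl | h
  · obtain ⟨n, hn, hval, hsteps⟩ := exists_stepsIn_of_lt hA hB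
      (fun i => by rcases hAB i with h | h | h <;> linarith) hS h
    exact Or.inr ⟨-1, Or.inr rfl, n, hn, hsteps, by linarith⟩
  · have hsucc := comp_succAbove_eq_of_erase_eq (strictAnti_of_antitone_add_index hA)
      (strictAnti_of_antitone_add_index hB) hS
    have hoff : ∀ j, j ≠ ℓ → B j = A j := fun j hj => by
      obtain ⟨i, rfl⟩ := Fin.exists_succAbove_eq hj
      exact (congrFun hsucc i).symm
    have hone : ∀ f, StepsIn ((univ.image A).erase (A ℓ)) (A ℓ) f 1 := fun _ _ _ _ => by omega
    rcases hAB ℓ with h | h | h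
    · exact Or.inr ⟨-1, Or.inr rfl, 1, one_pos, hone _, by rw [h]; ring⟩
    · refine Or.inl ⟨rfl, funext fun j => ?_⟩
      rcases eq_or_ne j ℓ with rfl | hj
      exacts [h, hoff j hj]
    · exact Or.inr ⟨1, Or.inl rfl, 1, one_pos, hone _, by rw [h]; ring⟩
  · obtain ⟨n, hn, hval, hsteps⟩ := exists_stepsIn_of_lt hB hA
      (fun i => by rcases hAB i with h | h | h <;> linarith) hS.symm h
    exact Or.inr ⟨1, Or.inl rfl, n, hn, hS ▸ hsteps.reverse (by linarith), by linarith⟩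

lemma tilde_eq_add (x : Wt m) : tilde m x = tilde m 0 + x := by
  ext i
  · simp only [tilde, Prod.fst_add, Prod.fst_zero]; ring
  · simp only [tilde, Prod.snd_add, Prod.snd_zero, Pi.add_apply, Pi.zero_apply]; ring

lemma tilde_injective : Injective (tilde m) := fun x y h => by
  rwa [tilde_eq_add x, tilde_eq_add y, add_right_inj] at h

lemma tilde_add (x y : Wt m) : tilde m (x + y) = tilde m x + y := by
  rw [tilde_eq_add, tilde_eq_add x, add_assoc]

lemma tilde_sigmaW (lam : Wt m) :
    tilde m (sigmaW m lam) = (-(tilde m lam).1, (tilde m lam).2) := by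
  ext <;> simp only [tilde, sigmaW]; ring

lemma tilde_add_smul_root (ν : Wt m) (a c f : ℚ) (ℓ : Fin m) :
    tilde m (ν + a • (c, f • Pi.single ℓ 1)) =
      ((tilde m ν).1 + a * c, update (tilde m ν).2 ℓ ((tilde m ν).2 ℓ + a * f)) := by
  rw [tilde_add]
  ext i
  · simp
  · rcases eq_or_ne i ℓ with rfl | h <;> simp [*]

lemma image_abs_tact (w : W0T m) (v : Wt m) :
    univ.image (fun i => |(tact m w v).2 i|) = univ.image (fun i => |v.2 i|) := by
  have h : (fun i => |(tact m w v).2 i|) = (fun i => |v.2 i|) ∘ w.1.symm := by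
    funext i
    simp only [tact, comp_apply, abs_mul, Equiv.Perm.inv_def]
    split_ifs <;> simp
  rw [h, ← image_image, image_univ_equiv]

namespace G0Dom

variable {lam : Wt m}

lemma tilde_snd_pos (h : G0Dom m lam) (i : Fin m) : 0 < (tilde m lam).2 i := by
  have h1 := h.2 i
  have h2 : ((i : ℕ) : ℚ) + 1 ≤ m := by exact_mod_cast i.isLt
  simp only [tilde]
  linarith

lemma antitone_tilde_snd_add (h : G0Dom m lam) :
    Antitone fun i : Fin m => (tilde m lam).2 i + (i : ℕ) := by
  intro i j hij
  have := h.1 i j hij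
  simp only [tilde]
  linarith

lemma strictAnti_tilde_snd (h : G0Dom m lam) : StrictAnti (tilde m lam).2 :=
  strictAnti_of_antitone_add_index h.antitone_tilde_snd_add

lemma abs_update_tilde_snd (h : G0Dom m lam) {ℓ : Fin m} {v : ℚ} (hv : 0 < v) :
    (fun i => |update (tilde m lam).2 ℓ v i|) = update (tilde m lam).2 ℓ v :=
  funext fun i => abs_of_pos <| by
    rcases eq_or_ne i ℓ with rfl | hi
    · simpa using hv
    · simpa [hi] using h.tilde_snd_pos i

lemma eq_of_image_eq {mu : Wt m} (hl : G0Dom m lam) (hmu : G0Dom m mu)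
    (h1 : (tilde m lam).1 = (tilde m mu).1)
    (h2 : univ.image (tilde m lam).2 = univ.image (tilde m mu).2) : lam = mu :=
  tilde_injective <| Prod.ext h1 <|
    hl.strictAnti_tilde_snd.eq_of_image_univ_eq hmu.strictAnti_tilde_snd h2

end G0Dom

lemma IsPlus.eq {y out mu : Wt m} (h : IsPlus m y out) (hmu : G0Dom m mu)
    (h1 : (tilde m mu).1 = (tilde m y).1)
    (h2 : univ.image (tilde m mu).2 = univ.image fun i => |(tilde m y).2 i|) : mu = out := by
  obtain ⟨hout, w, hw⟩ := h
  refine hmu.eq_of_image_eq hout (by rw [h1, hw]; rfl) ?_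
  rw [h2, ← image_abs_tact w, ← hw]
  congr 1
  exact funext fun i => abs_of_pos (hout.tilde_snd_pos i)

/-- `out = (ν + aη)⁺` for the least positive integer `a` making `ν + aη` regular; with `γ` the
atypical root of `ν`, `IsHat` is the case `η = γ` and `IsCheck` the case `η = -γ`. -/
def IsFirstRegular (m : ℕ) (ν η out : Wt m) : Prop :=
  ∃ a : ℕ, 0 < a ∧ Regular m (ν + (a : ℚ) • η) ∧
    (∀ b : ℕ, 0 < b → b < a → ¬Regular m (ν + (b : ℚ) • η)) ∧ IsPlus m (ν + (a : ℚ) • η) out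

lemma IsCheck.exists_isFirstRegular {ν out : Wt m} (h : IsCheck m ν out) :
    ∃ γ, AtypRoot m ν γ ∧ IsFirstRegular m ν (-γ) out := by
  obtain ⟨γ, hγ, a, ha, hreg, hmin, hplus⟩ := h
  simp only [IsFirstRegular, smul_neg, ← sub_eq_add_neg]
  exact ⟨γ, hγ, a, ha, hreg, hmin, hplus⟩

lemma AtypRoot.eq_of_g0Dom {ν γ : Wt m} {ℓ : Fin m} {s : ℚ} (hγ : AtypRoot m ν γ)
    (hν : G0Dom m ν) (hs : s = 1 ∨ s = -1) (hroot : (tilde m ν).1 = s * (tilde m ν).2 ℓ) :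
    γ = (1, s • Pi.single ℓ 1) := by
  have hpos := hν.tilde_snd_pos
  have hinj := hν.strictAnti_tilde_snd.injective
  obtain ⟨l, ⟨rfl, hl⟩ | ⟨rfl, hl⟩⟩ := hγ <;> rcases hs with rfl | rfl
  · obtain rfl : l = ℓ := hinj (by linarith)
    ext <;> simp [deltaW, epsW]
  · linarith [hpos l, hpos ℓ]
  · linarith [hpos l, hpos ℓ]
  · obtain rfl : l = ℓ := hinj (by linarith)
    ext <;> simp [deltaW, epsW]

section FirstRegular

variable {ν mu out : Wt m} {ℓ ℓ' : Fin m} {f : ℚ} {n : ℕ}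

theorem IsFirstRegular.eq_of_stepsIn {c : ℚ}
    (hout : IsFirstRegular m ν (c, f • Pi.single ℓ 1) out) (hν : G0Dom m ν) (hmu : G0Dom m mu)
    (hS : (univ.image (tilde m ν).2).erase ((tilde m ν).2 ℓ) =
      (univ.image (tilde m mu).2).erase ((tilde m mu).2 ℓ'))
    (hn : 0 < n)
    (hsteps : StepsIn ((univ.image (tilde m ν).2).erase ((tilde m ν).2 ℓ)) ((tilde m ν).2 ℓ) f n)
    (hval : (tilde m mu).2 ℓ' = (tilde m ν).2 ℓ + n * f)
    (h0 : (tilde m mu).1 = (tilde m ν).1 + n * c) : mu = out := by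
  set A := (tilde m ν).2
  set S := (univ.image A).erase (A ℓ)
  obtain ⟨a, ha, hreg, hmin, hplus⟩ := hout
  have hregular : ∀ b : ℕ, 0 < A ℓ + b * f →
      (Regular m (ν + (b : ℚ) • (c, f • Pi.single ℓ 1)) ↔ A ℓ + b * f ∉ S) := fun b hb => by
    change Injective (fun i => |(tilde m _).2 i|) ↔ _
    rw [tilde_add_smul_root, hν.abs_update_tilde_snd hb]
    exact injective_update_iff hν.strictAnti_tilde_snd.injective _ _
  have hvpos : 0 < A ℓ + n * f := hval ▸ hmu.tilde_snd_pos ℓ'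
  have hvS : A ℓ + n * f ∉ S := by rw [← hval, hS]; exact notMem_erase _ _
  have hSpos : ∀ x ∈ S, 0 < x := fun x hx => by
    obtain ⟨i, -, rfl⟩ := mem_image.1 (mem_of_mem_erase hx)
    exact hν.tilde_snd_pos i
  obtain rfl : a = n := by
    rcases lt_trichotomy a n with h | h | h
    · have hmem := hsteps a ha h
      exact absurd hmem ((hregular a (hSpos _ hmem)).1 hreg)
    · exact h
    · exact absurd ((hregular n hvpos).2 hvS) (hmin n hn h)
  refine hplus.eq hmu (by rw [h0, tilde_add_smul_root]) ?_
  rw [tilde_add_smul_root, hν.abs_update_tilde_snd hvpos,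
    image_update_univ hν.strictAnti_tilde_snd.injective, ← hval]
  change _ = insert _ S
  rw [hS, insert_erase (mem_image_of_mem _ (mem_univ _))]

theorem IsCheck.eq_of_stepsIn (hout : IsCheck m ν out) (hν : G0Dom m ν) (hmu : G0Dom m mu)
    (hf : f = 1 ∨ f = -1) (hroot : (tilde m ν).1 = -f * (tilde m ν).2 ℓ)
    (hS : (univ.image (tilde m ν).2).erase ((tilde m ν).2 ℓ) =
      (univ.image (tilde m mu).2).erase ((tilde m mu).2 ℓ'))
    (hn : 0 < n)
    (hsteps : StepsIn ((univ.image (tilde m ν).2).erase ((tilde m ν).2 ℓ)) ((tilde m ν).2 ℓ) f n)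
    (hval : (tilde m mu).2 ℓ' = (tilde m ν).2 ℓ + n * f)
    (h0 : (tilde m mu).1 = (tilde m ν).1 - n) : mu = out := by
  obtain ⟨γ, hγ, hfirst⟩ := hout.exists_isFirstRegular
  rw [hγ.eq_of_g0Dom hν (by rcases hf with rfl | rfl <;> norm_num) hroot] at hfirst
  refine IsFirstRegular.eq_of_stepsIn (c := -1) (by simpa using hfirst) hν hmu hS hn hsteps hval ?_
  rw [h0]; ring

theorem IsHat.eq_of_stepsIn (hout : IsHat m ν out) (hν : G0Dom m ν) (hmu : G0Dom m mu)
    (hf : f = 1 ∨ f = -1) (hroot : (tilde m ν).1 = f * (tilde m ν).2 ℓ)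
    (hS : (univ.image (tilde m ν).2).erase ((tilde m ν).2 ℓ) =
      (univ.image (tilde m mu).2).erase ((tilde m mu).2 ℓ'))
    (hn : 0 < n)
    (hsteps : StepsIn ((univ.image (tilde m ν).2).erase ((tilde m ν).2 ℓ)) ((tilde m ν).2 ℓ) f n)
    (hval : (tilde m mu).2 ℓ' = (tilde m ν).2 ℓ + n * f)
    (h0 : (tilde m mu).1 = (tilde m ν).1 + n) : mu = out := by
  obtain ⟨γ, hγ, hfirst⟩ := hout
  rw [hγ.eq_of_g0Dom hν hf hroot] at hfirst
  exact IsFirstRegular.eq_of_stepsIn hfirst hν hmu hS hn hsteps hval (by rw [h0, mul_one])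

end FirstRegular

lemma tilde_bounds_of_sub_eq {lam mu : Wt m} {θ : ℕ} {θm θp : Fin m → ℕ}
    (hθm : ∀ i, θm i ≤ 1) (hθp : ∀ i, θp i ≤ 1)
    (hdiff : lam - mu =
      (θ : ℚ) • deltaW m + (∑ i, (θm i : ℚ) • (deltaW m - epsW i)) +
        ∑ i, (θp i : ℚ) • (deltaW m + epsW i)) :
    (tilde m mu).1 ≤ (tilde m lam).1 ∧ ∀ i, (tilde m mu).2 i = (tilde m lam).2 i - 1 ∨
      (tilde m mu).2 i = (tilde m lam).2 i ∨ (tilde m mu).2 i = (tilde m lam).2 i + 1 := by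
  have h1 := congrArg Prod.fst hdiff
  have h2 := fun i => congrFun (congrArg Prod.snd hdiff) i
  simp only [Prod.fst_sub, deltaW, Prod.smul_mk, smul_eq_mul, mul_one, smul_zero, epsW,
    Prod.mk_sub_mk, sub_zero, zero_sub, smul_neg, Prod.mk_add_mk, add_zero, zero_add, Prod.fst_add,
    Prod.fst_sum, Prod.snd_sub, Pi.sub_apply, Prod.snd_add, Prod.snd_sum, sum_neg_distrib,
    Pi.add_apply, Pi.neg_apply, Finset.sum_apply, Pi.smul_apply, Pi.single_apply, mul_ite, mul_zero,
    sum_ite_eq, mem_univ, ↓reduceIte] at h1 h2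
  refine ⟨?_, fun i => ?_⟩
  · have : (0 : ℚ) ≤ ∑ i, (θm i : ℚ) := sum_nonneg fun _ _ => by positivity
    have : (0 : ℚ) ≤ ∑ i, (θp i : ℚ) := sum_nonneg fun _ _ => by positivity
    simp only [tilde]
    linarith [(Nat.cast_nonneg θ : (0 : ℚ) ≤ θ)]
  · have hi := h2 i
    simp only [tilde]
    rcases Nat.le_one_iff_eq_zero_or_eq_one.1 (hθm i) with h | h <;>
      rcases Nat.le_one_iff_eq_zero_or_eq_one.1 (hθp i) with h' | h' <;>
      simp only [h, h', Nat.cast_zero, Nat.cast_one] at hi <;>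
      first
        | exact Or.inl (by linarith)
        | exact Or.inr (Or.inl (by linarith))
        | exact Or.inr (Or.inr (by linarith))

lemma eq_or_eq_sigmaW_of_tilde_snd_eq {lam mu : Wt m} (h2 : (tilde m mu).2 = (tilde m lam).2)
    (h1 : |(tilde m mu).1| = |(tilde m lam).1|) : mu = lam ∨ mu = sigmaW m lam := by
  rcases abs_eq_abs.1 h1 with h | h
  · exact Or.inl (tilde_injective (Prod.ext h h2))
  · exact Or.inr (tilde_injective (by rw [tilde_sigmaW, ← h, ← h2]))

lemma eq_isCheck_or_eq_isHat_of_stepsIn {lam mu lamc lamsc lamsh : Wt m} {ℓ ℓ' : Fin m}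
    {f : ℚ} {n : ℕ} (hl : G0Dom m lam) (hmu : G0Dom m mu)
    (hc : IsCheck m lam lamc) (hsc : IsCheck m (sigmaW m lam) lamsc)
    (hsh : IsHat m (sigmaW m lam) lamsh)
    (hℓ : |(tilde m lam).1| = (tilde m lam).2 ℓ) (hℓ' : |(tilde m mu).1| = (tilde m mu).2 ℓ')
    (hle : (tilde m mu).1 ≤ (tilde m lam).1)
    (hS : (univ.image (tilde m lam).2).erase ((tilde m lam).2 ℓ) =
      (univ.image (tilde m mu).2).erase ((tilde m mu).2 ℓ'))
    (hf : f = 1 ∨ f = -1) (hn : 0 < n)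
    (hsteps :
      StepsIn ((univ.image (tilde m lam).2).erase ((tilde m lam).2 ℓ)) ((tilde m lam).2 ℓ) f n)
    (hval : (tilde m mu).2 ℓ' = (tilde m lam).2 ℓ + n * f) :
    mu = lamc ∨ mu = lamsc ∨ mu = lamsh := by
  have hA := hl.tilde_snd_pos ℓ
  have hB := hmu.tilde_snd_pos ℓ'
  have hn' : (0 : ℚ) < n := by exact_mod_cast hn
  have hσ0 : (tilde m (sigmaW m lam)).1 = -(tilde m lam).1 := by rw [tilde_sigmaW]
  have hσ2 : (tilde m (sigmaW m lam)).2 = (tilde m lam).2 := rfl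
  rcases (abs_eq hA.le).1 hℓ with hp | hp <;> rcases (abs_eq hB.le).1 hℓ' with hq | hq <;>
    rcases hf with rfl | rfl
  · linarith
  · exact .inl (hc.eq_of_stepsIn hl hmu (.inr rfl) (by linarith) hS hn hsteps hval (by linarith))
  · exact .inr (.inl (hsc.eq_of_stepsIn hl hmu (.inl rfl) (by rw [hσ2]; linarith) hS hn hsteps
      hval (by linarith)))
  · exact .inr (.inr (hsh.eq_of_stepsIn hl hmu (.inr rfl) (by rw [hσ2]; linarith) hS hn hsteps
      hval (by linarith)))
  · linarith
  · linarith
  · exact .inl (hc.eq_of_stepsIn hl hmu (.inl rfl) (by linarith) hS hn hsteps hval (by linarith))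
  · linarith

end

theorem primitive_weight_candidates_general (m : ℕ) (lam mu : Wt m)
    (hl2 : G0Dom m lam) (hl3 : Atypical m lam)
    (hmu2 : G0Dom m mu) (hmu3 : Atypical m mu)
    (htype : atypType m lam = atypType m mu)
    (θ : ℕ) (θm θp : Fin m → ℕ)
    (hθm : ∀ i, θm i ≤ 1) (hθp : ∀ i, θp i ≤ 1)
    (hdiff : lam - mu =
      (θ : ℚ) • deltaW m + (∑ i, (θm i : ℚ) • (deltaW m - epsW i)) +
        ∑ i, (θp i : ℚ) • (deltaW m + epsW i))
    (lamc lamsc lamsh : Wt m)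
    (hc : IsCheck m lam lamc)
    (hsc : IsCheck m (sigmaW m lam) lamsc)
    (hsh : IsHat m (sigmaW m lam) lamsh) :
    mu = lam ∨ mu = lamc ∨ mu = sigmaW m lam ∨ mu = lamsc ∨ mu = lamsh := by
  obtain ⟨ℓ, hℓ⟩ := hl3
  obtain ⟨ℓ', hℓ'⟩ := hmu3
  obtain ⟨hle, hAB⟩ := tilde_bounds_of_sub_eq hθm hθp hdiff
  have hS : (univ.image (tilde m lam).2).erase ((tilde m lam).2 ℓ) =
      (univ.image (tilde m mu).2).erase ((tilde m mu).2 ℓ') := by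
    simpa only [atypType, hℓ, hℓ'] using htype
  rcases eq_or_exists_stepsIn hl2.antitone_tilde_snd_add hmu2.antitone_tilde_snd_add hAB hS with
    ⟨rfl, hBA⟩ | ⟨f, hf, n, hn, hsteps, hval⟩
  · rcases eq_or_eq_sigmaW_of_tilde_snd_eq hBA (by rw [hℓ, hℓ', hBA]) with h | h
    exacts [Or.inl h, Or.inr (Or.inr (Or.inl h))]
  · rcases eq_isCheck_or_eq_isHat_of_stepsIn hl2 hmu2 hc hsc hsh hℓ hℓ' hle hS hf hn hsteps hval
      with h | h | h <;> simp only [h, true_or, or_true]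

/-- combinatorial content of Lemma 3.8(1) for `k = 2m+1`:
if `λ, μ` are integral `g₀`-dominant atypical weights with the same
atypicality type and
`λ − μ = θδ + Σᵢ θᵢ(δ − εᵢ) + Σᵢ θ̄ᵢ(δ + εᵢ)` with `θ ∈ ℤ≥0`,
`θᵢ, θ̄ᵢ ∈ {0,1}`, then `μ ∈ {λ, λˇ, λ^σ, (λ^σ)ˇ, (λ^σ)^}`. -/
theorem primitive_weight_candidates (m : ℕ) (hm : 1 ≤ m) (lam mu : Wt m)
    (hl1 : Integral m lam) (hl2 : G0Dom m lam) (hl3 : Atypical m lam)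
    (hmu1 : Integral m mu) (hmu2 : G0Dom m mu) (hmu3 : Atypical m mu)
    (htype : atypType m lam = atypType m mu)
    (θ : ℕ) (θm θp : Fin m → ℕ)
    (hθm : ∀ i, θm i ≤ 1) (hθp : ∀ i, θp i ≤ 1)
    (hdiff : lam - mu =
      (θ : ℚ) • deltaW m + (∑ i, (θm i : ℚ) • (deltaW m - epsW i)) +
        ∑ i, (θp i : ℚ) • (deltaW m + epsW i))
    (lamc lamsc lamsh : Wt m)
    (hc : IsCheck m lam lamc)
    (hsc : IsCheck m (sigmaW m lam) lamsc)
    (hsh : IsHat m (sigmaW m lam) lamsh) :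
    mu = lam ∨ mu = lamc ∨ mu = sigmaW m lam ∨ mu = lamsc ∨ mu = lamsh :=
  primitive_weight_candidates_general m lam mu hl2 hl3 hmu2 hmu3 htype θ θm θp hθm hθp hdiff lamc
    lamsc lamsh hc hsc hsh

end
end

section
/- The set of integral g-dominant atypical weights whose atypicality type equals the atypicality type of the zero weight (namely the set {m−1−s, m−2−s, ..., 1−s}) is exactly {Λ^{(i)} : i ∈ ℤ≥0}, where Λ^{(0)} = (0 | 0, ..., 0) and Λ^{(i)} = (2m + i − 1 − 2s | i−1, 0, ..., 0) for i ≥ 1. (This is the classification (6.2) of the weights Λ^{(i)} with the same central character as the trivial module, used in the computation of the cohomology groups.) -/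
/-!
The classification (6.2) of Su–Zhang: the integral `g`-dominant atypical
weights whose atypicality type equals that of the zero weight (namely
`{m−1−s, …, 1−s}`) are exactly the weights `Λ⁽⁰⁾ = (0 | 0, …, 0)` and
`Λ⁽ⁱ⁾ = (2m+i−1−2s | i−1, 0, …, 0)` for `i ≥ 1`.  Here `k = 2m+1`, `m ≥ 1`,
`s = 1/2` when `par = true`, and `k = 2m`, `m ≥ 2`, `s = 1` when
`par = false`.  A weight `(λ₀ | λ₁, …, λ_m)` is encoded as
`ℚ × (Fin m → ℚ)`, the index `i : Fin m` standing for `λ_{i+1}`.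
-/

open Finset

noncomputable section

/-- `s = 1/2` for `k = 2m+1` (`par = true`), `s = 1` for `k = 2m`. -/
def sval (par : Bool) : ℚ := if par then 1 / 2 else 1

/-- The ρ-translated weight `λ̃ = λ + ρ`,
`ρ = (s−m | m−s, m−1−s, …, 1−s)`. -/
def tildeP (m : ℕ) (par : Bool) (lam : Wt m) : Wt m :=
  (lam.1 + sval par - m,
    fun i => lam.2 i + (m : ℚ) + 1 - sval par - (((i : ℕ) : ℚ) + 1))

/-- `λ` is integral: `λ₀ ∈ ℤ` and `λ₁, …, λ_m` all in `ℤ` or all in `s + ℤ`. -/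
def IntegralP (m : ℕ) (par : Bool) (lam : Wt m) : Prop :=
  (∃ n : ℤ, lam.1 = (n : ℚ)) ∧
    ((∀ i, ∃ n : ℤ, lam.2 i = (n : ℚ)) ∨
      ∀ i, ∃ n : ℤ, lam.2 i = (n : ℚ) + sval par)

/-- `λ` is `g₀`-dominant: `λ₁ ≥ … ≥ λ_{m−1} ≥ |λ_m|`, with additionally
`λ_m ≥ 0` when `k = 2m+1`. -/
def G0DomP (m : ℕ) (par : Bool) (lam : Wt m) : Prop :=
  (∀ i j : Fin m, i < j →
      (if (j : ℕ) = m - 1 then |lam.2 j| else lam.2 j) ≤ lam.2 i) ∧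
    (par = true → ∀ j : Fin m, (j : ℕ) = m - 1 → 0 ≤ lam.2 j)

/-- `λ` is atypical: `|λ̃₀| = |λ̃_ℓ|` for some `ℓ`. -/
def AtypicalP (m : ℕ) (par : Bool) (lam : Wt m) : Prop :=
  ∃ l : Fin m, |(tildeP m par lam).1| = |(tildeP m par lam).2 l|

/-- The atypicality type `S(λ̄) = {|λ̃_i| : i ≠ ℓ}` of an atypical
`g₀`-dominant weight (where `|λ̃_ℓ| = |λ̃₀|`). -/
def atypTypeP (m : ℕ) (par : Bool) (lam : Wt m) : Finset ℚ :=
  (Finset.univ.image fun i => |(tildeP m par lam).2 i|).erase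
    |(tildeP m par lam).1|

/-- `λ` is `g`-dominant: it is integral, `g₀`-dominant, `λ₀ ∈ ℤ≥0`, and
`λ_j = 0` whenever `j > λ₀`. -/
def GDomP (m : ℕ) (par : Bool) (lam : Wt m) : Prop :=
  IntegralP m par lam ∧ G0DomP m par lam ∧ 0 ≤ lam.1 ∧
    ∀ i : Fin m, lam.1 < ((i : ℕ) : ℚ) + 1 → lam.2 i = 0

/-- The atypicality type of the zero weight: `{m−1−s, m−2−s, …, 1−s}`. -/
def S0 (m : ℕ) (par : Bool) : Finset ℚ :=
  Finset.univ.image fun i : Fin (m - 1) => ((i : ℕ) : ℚ) + 1 - sval par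

/-- `Λ⁽⁰⁾ = (0 | 0, …, 0)` and `Λ⁽ⁱ⁾ = (2m+i−1−2s | i−1, 0, …, 0)` for
`i ≥ 1`. -/
def LambdaW (m : ℕ) (par : Bool) (i : ℕ) : Wt m :=
  if i = 0 then 0
  else (2 * (m : ℚ) + (i : ℚ) - 1 - 2 * sval par,
    fun j => if (j : ℕ) = 0 then (i : ℚ) - 1 else 0)

/-!
Shifting by `ρ` turns `g₀`-dominance into the statement that `j ↦ |λ̃_j|` decreases by at least
one at every step. Hence the `|λ̃_j|` with `j ≠ ℓ` are distinct and make up the atypicality type.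
Comparing with `{1−s, …, m−1−s}`, whose maximum lies below `|λ̃₁| ≥ m−s`, forces `ℓ = 1` and
`|λ̃_j| = ρ_j` for `j ≥ 2`, i.e. `λ_j = 0`. The atypicality condition
`|λ₀ + s − m| = λ₁ + m − s` then leaves `λ₀ = λ₁ + 2m − 2s`, which is `Λ^(λ₁+1)`, or
`λ₀ = −λ₁`, which forces `λ = 0`.
-/

open Function

section

variable {m : ℕ} {par : Bool}

lemma sval_le_one (par : Bool) : sval par ≤ 1 := by
  cases par <;> norm_num [sval]

lemma exists_int_two_mul_sval (par : Bool) : ∃ z : ℤ, 2 * sval par = z := by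
  cases par
  · exact ⟨2, by norm_num [sval]⟩
  · exact ⟨1, by norm_num [sval]⟩

def rho (m : ℕ) (par : Bool) (j : Fin m) : ℚ := m - sval par - j

lemma rho_nonneg (j : Fin m) : 0 ≤ rho m par j := by
  have hj : (j : ℚ) + 1 ≤ m := by exact_mod_cast j.isLt
  have := sval_le_one par
  unfold rho
  linarith

lemma rho_mem_Icc_of_ne_zero [NeZero m] {j : Fin m} (hj : j ≠ 0) :
    rho m par j ∈ Set.Icc (1 - sval par) (m - 1 - sval par) := by
  have h1 : (1 : ℚ) ≤ j := by exact_mod_cast Nat.one_le_iff_ne_zero.2 (Fin.val_ne_zero_iff.2 hj)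
  have h2 : (j : ℚ) + 1 ≤ m := by exact_mod_cast j.isLt
  constructor <;> (unfold rho; linarith)

lemma tildeP_fst (lam : Wt m) : (tildeP m par lam).1 = lam.1 + sval par - m := rfl

lemma tildeP_snd (lam : Wt m) (j : Fin m) :
    (tildeP m par lam).2 j = lam.2 j + rho m par j := by
  simp only [tildeP, rho]
  ring

lemma mem_S0_iff [NeZero m] {x : ℚ} :
    x ∈ S0 m par ↔ ∃ j : Fin m, j ≠ 0 ∧ rho m par j = x := by
  simp only [S0, mem_image, mem_univ, true_and, rho]
  constructor
  · rintro ⟨c, rfl⟩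
    refine ⟨⟨m - 1 - c, by omega⟩, fun h => ?_, ?_⟩
    · have := congrArg Fin.val h
      simp only [Fin.val_zero] at this
      omega
    · have := c.isLt
      push_cast [Nat.cast_sub (by omega : c ≤ m - 1), Nat.cast_sub (by omega : 1 ≤ m)]
      ring
  · rintro ⟨j, hj, rfl⟩
    have hj0 : (j : ℕ) ≠ 0 := Fin.val_ne_zero_iff.mpr hj
    refine ⟨⟨m - 1 - j, by omega⟩, ?_⟩
    have := j.isLt
    push_cast [Nat.cast_sub (by omega : (j : ℕ) ≤ m - 1), Nat.cast_sub (by omega : 1 ≤ m)]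
    ring

lemma S0_eq_image [NeZero m] : S0 m par = (univ.erase 0).image (rho m par) := by
  ext x
  simp [mem_S0_iff]

lemma atypTypeP_eq_image_erase {lam : Wt m} {l : Fin m}
    (hinj : Injective fun j => |(tildeP m par lam).2 j|)
    (hl : |(tildeP m par lam).1| = |(tildeP m par lam).2 l|) :
    atypTypeP m par lam = (univ.erase l).image fun j => |(tildeP m par lam).2 j| := by
  rw [atypTypeP, hl, image_erase hinj]

theorem eq_zero_of_image_erase_eq_S0 [NeZero m] {lam : Wt m} {l : Fin m} (h0 : 0 ≤ lam.2 0)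
    (hS : (univ.erase l).image (fun j => |(tildeP m par lam).2 j|) = S0 m par) : l = 0 := by
  by_contra hl
  obtain ⟨k, hk, hkeq⟩ := mem_S0_iff.1
    (hS ▸ mem_image_of_mem _ (mem_erase.2 ⟨Ne.symm hl, mem_univ 0⟩))
  have hT0 : lam.2 0 + rho m par 0 ≤ |(tildeP m par lam).2 0| := tildeP_snd lam 0 ▸ le_abs_self _
  have hk1 := (rho_mem_Icc_of_ne_zero (par := par) hk).2
  simp only [rho, Fin.val_zero, Nat.cast_zero] at hT0
  linarith

end

namespace G0DomP

variable {m : ℕ} {par : Bool} {lam : Wt m}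

theorem abs_snd_le_of_lt (h : G0DomP m par lam) {i j : Fin m} (hij : i < j) :
    |lam.2 j| ≤ lam.2 i := by
  by_cases hj : (j : ℕ) = m - 1
  · simpa [hj] using h.1 i j hij
  · have hlast : j < ⟨m - 1, by omega⟩ := show (j : ℕ) < m - 1 by omega
    have hj0 : 0 ≤ lam.2 j := (abs_nonneg _).trans (by simpa using h.1 j _ hlast)
    simpa [hj, abs_of_nonneg hj0] using h.1 i j hij

theorem snd_nonneg (h : G0DomP m par lam) (j : Fin m) (hj : (j : ℕ) + 1 < m ∨ par = true) :
    0 ≤ lam.2 j := by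
  by_cases hlast : (j : ℕ) = m - 1
  · exact h.2 (hj.resolve_left (by omega)) j hlast
  · exact (abs_nonneg _).trans (h.abs_snd_le_of_lt (j := ⟨m - 1, by omega⟩)
      (show (j : ℕ) < m - 1 by omega))

theorem antitone_abs_tildeP_snd_add (h : G0DomP m par lam) :
    Antitone fun j : Fin m => |(tildeP m par lam).2 j| + j := by
  intro i j hij
  rcases hij.lt_or_eq with hij | rfl
  · have hj : |(tildeP m par lam).2 j| ≤ |lam.2 j| + rho m par j := by
      rw [tildeP_snd]
      simpa [abs_of_nonneg (rho_nonneg j)] using abs_add_le (lam.2 j) (rho m par j)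
    have hi : lam.2 i + rho m par i ≤ |(tildeP m par lam).2 i| := by
      rw [tildeP_snd]
      exact le_abs_self _
    have := h.abs_snd_le_of_lt hij
    simp only [rho] at hj hi ⊢
    linarith
  · exact le_rfl

theorem strictAnti_abs_tildeP_snd (h : G0DomP m par lam) :
    StrictAnti fun j : Fin m => |(tildeP m par lam).2 j| := by
  intro i j hij
  have hU := h.antitone_abs_tildeP_snd_add hij.le
  have : (i : ℚ) < j := by exact_mod_cast hij
  dsimp only at hU ⊢
  linarith

theorem snd_eq_zero_of_abs_tildeP_snd_eq_rho (h : G0DomP m par lam) {j : Fin m}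
    (hj : |(tildeP m par lam).2 j| = rho m par j) : lam.2 j = 0 := by
  rw [tildeP_snd] at hj
  by_cases hpos : (j : ℕ) + 1 < m ∨ par = true
  · have := h.snd_nonneg j hpos
    rw [abs_of_nonneg (by linarith [rho_nonneg (par := par) j])] at hj
    linarith
  · -- `λ_m` with `s = 1`: it may be negative, but `ρ_m = 0`
    obtain ⟨hlast, hpar⟩ : (j : ℕ) + 1 = m ∧ par = false := by
      push Not at hpos
      exact ⟨by omega, by simpa using hpos.2⟩
    have hrho : rho m par j = 0 := by
      have : (j : ℚ) + 1 = m := by exact_mod_cast hlast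
      simp only [rho, hpar, sval]
      norm_num
      linarith
    rw [hrho, add_zero] at hj
    exact abs_eq_zero.1 hj

theorem abs_tildeP_snd_eq_rho [NeZero m] (h : G0DomP m par lam)
    (hS : (univ.erase 0).image (fun j => |(tildeP m par lam).2 j|) = S0 m par)
    {j : Fin m} (hj : j ≠ 0) : |(tildeP m par lam).2 j| = rho m par j := by
  have hj1 : 1 ≤ (j : ℕ) := Nat.one_le_iff_ne_zero.2 (Fin.val_ne_zero_iff.2 hj)
  have hbounds : ∀ k : Fin m, k ≠ 0 →
      |(tildeP m par lam).2 k| ∈ Set.Icc (1 - sval par) (m - 1 - sval par) := by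
    intro k hk
    obtain ⟨k', hk', hk'eq⟩ :=
      mem_S0_iff.1 (hS ▸ mem_image_of_mem _ (mem_erase.2 ⟨hk, mem_univ k⟩))
    exact hk'eq ▸ rho_mem_Icc_of_ne_zero hk'
  set one : Fin m := ⟨1, by omega⟩
  set last : Fin m := ⟨m - 1, by omega⟩
  have hU := h.antitone_abs_tildeP_snd_add
  have hupper := hU (show one ≤ j from hj1)
  have hlower := hU (show j ≤ last by exact Nat.le_sub_one_of_lt j.isLt)
  have h1 := (hbounds one (Fin.val_ne_zero_iff.1 one_ne_zero)).2
  have h2 := (hbounds last (Fin.val_ne_zero_iff.1 (show m - 1 ≠ 0 by omega))).1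
  have hlastQ : ((last : ℕ) : ℚ) = m - 1 := by
    simp only [last]; push_cast [Nat.cast_sub (by omega : 1 ≤ m)]; ring
  simp only [one, Nat.cast_one, hlastQ] at hupper hlower
  simp only [rho]
  linarith

end G0DomP

section

variable {m : ℕ} {par : Bool}

lemma LambdaW_succ (n : ℕ) : LambdaW m par (n + 1) =
    (2 * m + n - 2 * sval par, fun j : Fin m => if (j : ℕ) = 0 then (n : ℚ) else 0) := by
  simp only [LambdaW, Nat.add_one_ne_zero, if_false, Nat.cast_add, Nat.cast_one,
    add_sub_cancel_right]
  congr 1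
  ring

lemma LambdaW_snd_of_ne_zero [NeZero m] (i : ℕ) {j : Fin m} (hj : j ≠ 0) :
    (LambdaW m par i).2 j = 0 := by
  rcases i with _ | n
  · simp [LambdaW]
  · simp [LambdaW_succ, hj]

lemma LambdaW_snd_zero_nonneg [NeZero m] (i : ℕ) : 0 ≤ (LambdaW m par i).2 0 := by
  rcases i with _ | n
  · simp [LambdaW]
  · simp [LambdaW_succ]

lemma abs_tildeP_LambdaW_fst [NeZero m] (i : ℕ) :
    |(tildeP m par (LambdaW m par i)).1| = |(tildeP m par (LambdaW m par i)).2 0| := by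
  rcases i with _ | n
  · simp only [LambdaW, if_true, tildeP_fst, tildeP_snd, rho, Prod.fst_zero, Prod.snd_zero,
      Pi.zero_apply, Fin.val_zero, Nat.cast_zero, zero_add, sub_zero]
    exact abs_sub_comm _ _
  · simp only [LambdaW_succ, tildeP_fst, tildeP_snd, rho, Fin.val_zero, if_true, Nat.cast_zero]
    ring_nf

lemma G0DomP.of_snd_eq_zero [NeZero m] {lam : Wt m} (h0 : 0 ≤ lam.2 0)
    (hsnd : ∀ j ≠ 0, lam.2 j = 0) : G0DomP m par lam := by
  have hnn : ∀ j, 0 ≤ lam.2 j := fun j => by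
    rcases eq_or_ne j 0 with rfl | hj
    exacts [h0, (hsnd j hj).ge]
  refine ⟨fun i j hij => ?_, fun _ j _ => hnn j⟩
  rw [hsnd j (ne_of_gt ((Fin.zero_le i).trans_lt hij))]
  split_ifs <;> simpa using hnn i

lemma gDomP_LambdaW [NeZero m] (i : ℕ) :
    GDomP m par (LambdaW m par i) := by
  have hdom : G0DomP m par (LambdaW m par i) :=
    .of_snd_eq_zero (LambdaW_snd_zero_nonneg i) fun _ => LambdaW_snd_of_ne_zero i
  rcases i with _ | n
  · exact ⟨⟨⟨0, by simp [LambdaW]⟩, .inl fun _ => ⟨0, by simp [LambdaW]⟩⟩, hdom,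
      by simp [LambdaW], fun _ _ => by simp [LambdaW]⟩
  obtain ⟨z, hz⟩ := exists_int_two_mul_sval par
  have hn : (0 : ℚ) ≤ n := n.cast_nonneg
  have hsm : 2 * sval par ≤ 2 * m := by
    have : (1 : ℚ) ≤ m := by exact_mod_cast NeZero.one_le
    linarith [sval_le_one par]
  rw [LambdaW_succ] at hdom ⊢
  refine ⟨⟨⟨2 * m + n - z, ?_⟩, .inl fun j => ⟨if (j : ℕ) = 0 then n else 0, ?_⟩⟩, hdom, ?_,
    fun j hj => ?_⟩
  · push_cast
    rw [hz]
  · dsimp only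
    split_ifs <;> simp
  · linarith
  · dsimp only at hj ⊢
    split_ifs with hj0
    · rw [hj0, Nat.cast_zero, zero_add] at hj
      have : (n : ℚ) < 1 := by linarith
      exact_mod_cast Nat.lt_one_iff.1 (by exact_mod_cast this)
    · rfl

theorem mem_range_LambdaW [NeZero m] {lam : Wt m} {n : ℤ}
    (hn : lam.1 = n) (hfst : 0 ≤ lam.1) (h0 : 0 ≤ lam.2 0) (hsnd : ∀ j ≠ 0, lam.2 j = 0)
    (hatyp : |(tildeP m par lam).1| = |(tildeP m par lam).2 0|) :
    lam ∈ Set.range (LambdaW m par) := by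
  have hlam_snd : ∀ j : Fin m, lam.2 j = if (j : ℕ) = 0 then lam.2 0 else 0 := fun j => by
    split_ifs with hj
    · rw [Fin.val_eq_zero_iff.1 hj]
    · exact hsnd j (Fin.val_ne_zero_iff.1 hj)
  have hrho0 := rho_nonneg (par := par) (0 : Fin m)
  rw [tildeP_fst, tildeP_snd, abs_of_nonneg (add_nonneg h0 hrho0)] at hatyp
  simp only [rho, Fin.val_zero, Nat.cast_zero, sub_zero] at hatyp hrho0
  rcases (abs_eq (by linarith)).1 hatyp with h | h
  · obtain ⟨z, hz⟩ := exists_int_two_mul_sval par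
    have hint : lam.2 0 = ((n - 2 * m + z : ℤ) : ℚ) := by push_cast; linarith
    obtain ⟨k, hk⟩ : ∃ k : ℕ, lam.2 0 = k := by
      lift n - 2 * m + z to ℕ using (by exact_mod_cast hint ▸ h0) with k
      exact ⟨k, by exact_mod_cast hint⟩
    refine ⟨k + 1, Prod.ext ?_ (funext fun j => ?_)⟩ <;> rw [LambdaW_succ]
    · dsimp only
      linarith
    · rw [hlam_snd j, hk]
  · have h1 : lam.1 = 0 := by linarith
    have h2 : lam.2 0 = 0 := by linarith
    refine ⟨0, Prod.ext ?_ (funext fun j => ?_)⟩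
    · simp [LambdaW, h1]
    · simp [LambdaW, hlam_snd j, h2]

end

/-- the set of integral `g`-dominant atypical weights with
atypicality type `{m−1−s, …, 1−s}` (the atypicality type of the zero weight)
is exactly `{Λ⁽ⁱ⁾ : i ∈ ℤ≥0}`. -/
theorem trivial_central_character_weights (m : ℕ) (par : Bool)
    (hm : if par then 1 ≤ m else 2 ≤ m) :
    {lam : Wt m | GDomP m par lam ∧ AtypicalP m par lam ∧
        atypTypeP m par lam = S0 m par} =
      Set.range (LambdaW m par) := by
  have : NeZero m := ⟨by split_ifs at hm <;> omega⟩
  ext lam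
  constructor
  · rintro ⟨⟨⟨⟨n, hn⟩, -⟩, hdom, hfst, -⟩, ⟨l, hl⟩, hS⟩
    have h0 : 0 ≤ lam.2 0 := hdom.snd_nonneg 0 <| by
      cases par
      · simp at hm ⊢
        omega
      · exact .inr rfl
    rw [atypTypeP_eq_image_erase hdom.strictAnti_abs_tildeP_snd.injective hl] at hS
    obtain rfl := eq_zero_of_image_erase_eq_S0 h0 hS
    exact mem_range_LambdaW hn hfst h0
      (fun j hj => hdom.snd_eq_zero_of_abs_tildeP_snd_eq_rho (hdom.abs_tildeP_snd_eq_rho hS hj)) hl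
  · rintro ⟨i, rfl⟩
    have hdom := gDomP_LambdaW (m := m) (par := par) i
    refine ⟨hdom, ⟨0, abs_tildeP_LambdaW_fst i⟩, ?_⟩
    rw [atypTypeP_eq_image_erase hdom.2.1.strictAnti_abs_tildeP_snd.injective
      (abs_tildeP_LambdaW_fst i), S0_eq_image]
    refine image_congr fun j hj => ?_
    rw [tildeP_snd, LambdaW_snd_of_ne_zero i (ne_of_mem_erase hj), zero_add,
      abs_of_nonneg (rho_nonneg j)]

end
end
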